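/- (Stabilization) For every finite simple graph G, integer h ≥ 1, and edge e of G, the sequence of higher-order H-index iterates (H^(n)sup(e))_{n≥0} is eventually constant: there exists N such that H^(n)sup(e) = H^(N)sup(e) for all n ≥ N. -/
import Mathlib


/-- The H-index of a finite multiset of natural numbers: the largest `y` such that
at least `y` elements of the multiset are `≥ y` (`0` for the empty multiset). -/
noncomputable def hIndex (S : Multiset ℕ) : ℕ :=
  sSup {y : ℕ | y ≤ (S.filter (fun x => y ≤ x)).card}

/-- The set of common `h`-neighbors of an edge `e` in `G`: the vertices `w`, distinct from
both endpoints of `e`, that are within distance `h` (i.e. joined by a walk of length `≤ h`)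
of both endpoints of `e`. -/
def commonHNbrs {V : Type*} (G : SimpleGraph V) (h : ℕ) (e : Sym2 V) : Set V :=
  {w | ∀ x ∈ e, w ≠ x ∧ ∃ p : G.Walk x w, p.length ≤ h}

/-- The `h`-support of an edge `e` in `G`: the number of common `h`-neighbors of `e`. -/
noncomputable def hSupport {V : Type*} (G : SimpleGraph V) (h : ℕ) (e : Sym2 V) : ℕ :=
  (commonHNbrs G h e).ncard

/-- The `h`-hop reachable path key of `a, b` with respect to an edge-value function `F`:
the maximum over all (nontrivial) paths `p` from `a` to `b` of length `≤ h` of the minimum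
of `F` over the edges of `p`. -/
noncomputable def pathKey {V : Type*} (G : SimpleGraph V) (h : ℕ) (F : Sym2 V → ℕ)
    (a b : V) : ℕ :=
  sSup {m | ∃ p : G.Walk a b, 0 < p.length ∧ p.length ≤ h ∧
    m = sInf {x | ∃ f ∈ p.edges, x = F f}}

/-- For an edge `e = (u,v)` and a vertex `w`, the value `min (P(u,w), P(v,w))` where `P`
is the path key with respect to `F`. -/
noncomputable def edgeKey {V : Type*} (G : SimpleGraph V) (h : ℕ) (F : Sym2 V → ℕ)
    (e : Sym2 V) (w : V) : ℕ :=
  sInf {m | ∃ x ∈ e, m = pathKey G h F x w}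

/-- The higher-order H-index iterates: `HSup G h 0 e = hSupport G h e`, and
`HSup G h (n+1) e = H({min (P(u,w), P(v,w)) : w a common h-neighbor of e})` where `P` is
the path key with respect to `HSup G h n`. -/
noncomputable def HSup {V : Type*} [Fintype V] (G : SimpleGraph V) (h : ℕ) :
    ℕ → Sym2 V → ℕ
  | 0 => fun e => hSupport G h e
  | n + 1 => fun e =>
      hIndex ((commonHNbrs G h e).toFinite.toFinset.val.map (edgeKey G h (HSup G h n) e))

/-- A graph `S` satisfies the `(k,h)`-truss property if every edge of `S` has `h`-support
at least `k - 2`, computed within `S`. -/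
def KHTrussProp {V : Type*} (S : SimpleGraph V) (h k : ℕ) : Prop :=
  ∀ e ∈ S.edgeSet, k ≤ hSupport S h e + 2

/-- `S` is the `(k,h)`-truss of `G`: a maximal subgraph of `G` each of whose edges has
`h`-support at least `k-2` within `S`. -/
def IsKHTruss {V : Type*} (G S : SimpleGraph V) (h k : ℕ) : Prop :=
  S ≤ G ∧ KHTrussProp S h k ∧
    ∀ T : SimpleGraph V, T ≤ G → KHTrussProp T h k → S ≤ T → T = S

/-- The `h`-trussness `t(e,h)` of an edge `e` of `G`: the largest `k` such that some
`(k,h)`-truss of `G` contains `e`. -/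
noncomputable def hTrussness {V : Type*} (G : SimpleGraph V) (h : ℕ) (e : Sym2 V) : ℕ :=
  sSup {k | ∃ S : SimpleGraph V, IsKHTruss G S h k ∧ e ∈ S.edgeSet}


section Aux

open Multiset

lemma card_filter_map_mono {α : Type*} (m : Multiset α) (g g' : α → ℕ)
    (hg : ∀ a ∈ m, g a ≤ g' a) (y : ℕ) :
    ((m.map g).filter (fun x => y ≤ x)).card ≤ ((m.map g').filter (fun x => y ≤ x)).card := by
  induction m using Multiset.induction_on with
  | empty => simp
  | cons a s ih =>
    have ha : g a ≤ g' a := hg a (mem_cons_self a s)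
    have ihs := ih (fun b hb => hg b (mem_cons_of_mem hb))
    simp only [Multiset.map_cons, Multiset.filter_cons]
    by_cases hy : y ≤ g a
    · rw [if_pos hy, if_pos (hy.trans ha)]
      simpa using Nat.add_le_add_left ihs 1
    · rw [if_neg hy]
      by_cases hy' : y ≤ g' a
      · rw [if_pos hy']
        simp only [Multiset.card_add, Multiset.card_singleton, Multiset.card_zero]
        omega
      · rw [if_neg hy']
        simpa using ihs

lemma hIndex_le_card (S : Multiset ℕ) : hIndex S ≤ S.card := by
  apply csSup_le ⟨0, by simp⟩
  intro y hy
  exact hy.trans (Multiset.card_le_card (S.filter_le _))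

lemma hIndex_map_mono {α : Type*} (m : Multiset α) (g g' : α → ℕ)
    (hg : ∀ a ∈ m, g a ≤ g' a) :
    hIndex (m.map g) ≤ hIndex (m.map g') := by
  have hbdd : ∀ f : α → ℕ, BddAbove {y : ℕ | y ≤ ((m.map f).filter (fun x => y ≤ x)).card} := by
    intro f
    refine ⟨m.card, fun y hy => ?_⟩
    calc y ≤ _ := hy
      _ ≤ (m.map f).card := Multiset.card_le_card (Multiset.filter_le _ _)
      _ = m.card := Multiset.card_map _ _
  have hne : ({y : ℕ | y ≤ ((m.map g).filter (fun x => y ≤ x)).card} : Set ℕ).Nonempty :=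
    ⟨0, by simp⟩
  have hmem := Nat.sSup_mem hne (hbdd g)
  have : hIndex (m.map g) ∈ {y : ℕ | y ≤ ((m.map g').filter (fun x => y ≤ x)).card} := by
    exact le_trans hmem (card_filter_map_mono m g g' hg _)
  exact le_csSup (hbdd g') this

variable {V : Type*}

lemma pathKeySet_subset_range (G : SimpleGraph V) (h : ℕ) (F : Sym2 V → ℕ) (a b : V) :
    {m | ∃ p : G.Walk a b, 0 < p.length ∧ p.length ≤ h ∧
      m = sInf {x | ∃ f ∈ p.edges, x = F f}} ⊆ Set.range F := by
  rintro m ⟨p, hp0, hph, rfl⟩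
  have hedges : p.edges ≠ [] := by
    intro hnil
    have := p.length_edges
    rw [hnil] at this
    simp at this
    omega
  obtain ⟨f, hf⟩ := List.exists_mem_of_ne_nil _ hedges
  have hne : {x | ∃ f ∈ p.edges, x = F f}.Nonempty := ⟨F f, f, hf, rfl⟩
  obtain ⟨f', _, hf'⟩ := Nat.sInf_mem hne
  exact ⟨f', hf'.symm⟩

lemma bddAbove_pathKeySet [Finite V] (G : SimpleGraph V) (h : ℕ) (F : Sym2 V → ℕ) (a b : V) :
    BddAbove {m | ∃ p : G.Walk a b, 0 < p.length ∧ p.length ≤ h ∧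
      m = sInf {x | ∃ f ∈ p.edges, x = F f}} :=
  ((Set.finite_range F).bddAbove).mono (pathKeySet_subset_range G h F a b)

lemma pathKey_mono [Finite V] (G : SimpleGraph V) (h : ℕ) (F F' : Sym2 V → ℕ)
    (hF : ∀ s, F s ≤ F' s) (a b : V) :
    pathKey G h F a b ≤ pathKey G h F' a b := by
  unfold pathKey
  by_cases hne : ({m | ∃ p : G.Walk a b, 0 < p.length ∧ p.length ≤ h ∧
      m = sInf {x | ∃ f ∈ p.edges, x = F f}} : Set ℕ).Nonempty
  · apply csSup_le hne
    rintro m ⟨p, hp0, hph, rfl⟩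
    have hedges : p.edges ≠ [] := by
      intro hnil
      have := p.length_edges
      rw [hnil] at this
      simp at this
      omega
    obtain ⟨f, hf⟩ := List.exists_mem_of_ne_nil _ hedges
    have hT' : {x | ∃ f ∈ p.edges, x = F' f}.Nonempty := ⟨F' f, f, hf, rfl⟩
    obtain ⟨f0, hf0, hf0eq⟩ := Nat.sInf_mem hT'
    have h1 : sInf {x | ∃ f ∈ p.edges, x = F f} ≤ F f0 := Nat.sInf_le ⟨f0, hf0, rfl⟩
    have h2 : sInf {x | ∃ f ∈ p.edges, x = F f} ≤ sInf {x | ∃ f ∈ p.edges, x = F' f} := by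
      rw [hf0eq]; exact h1.trans (hF f0)
    refine h2.trans (le_csSup (bddAbove_pathKeySet G h F' a b) ⟨p, hp0, hph, rfl⟩)
  · rw [Set.not_nonempty_iff_eq_empty.mp hne, csSup_empty]
    exact Nat.zero_le _

lemma edgeKey_mono [Finite V] (G : SimpleGraph V) (h : ℕ) (F F' : Sym2 V → ℕ)
    (hF : ∀ s, F s ≤ F' s) (e : Sym2 V) (w : V) :
    edgeKey G h F e w ≤ edgeKey G h F' e w := by
  unfold edgeKey
  have hne : ({m | ∃ x ∈ e, m = pathKey G h F' x w} : Set ℕ).Nonempty := by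
    induction e using Sym2.ind with
    | _ x y => exact ⟨pathKey G h F' x w, x, Sym2.mem_mk_left x y, rfl⟩
  obtain ⟨x0, hx0, hx0eq⟩ := Nat.sInf_mem hne
  rw [hx0eq]
  calc sInf {m | ∃ x ∈ e, m = pathKey G h F x w}
      ≤ pathKey G h F x0 w := Nat.sInf_le ⟨x0, hx0, rfl⟩
    _ ≤ pathKey G h F' x0 w := pathKey_mono G h F F' hF x0 w

lemma HSup_succ_le {V : Type*} [Fintype V] (G : SimpleGraph V) (h : ℕ) :
    ∀ n (e : Sym2 V), HSup G h (n + 1) e ≤ HSup G h n e := by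
  intro n
  induction n with
  | zero =>
    intro e
    show hIndex _ ≤ hSupport G h e
    calc hIndex ((commonHNbrs G h e).toFinite.toFinset.val.map (edgeKey G h (HSup G h 0) e))
        ≤ ((commonHNbrs G h e).toFinite.toFinset.val.map (edgeKey G h (HSup G h 0) e)).card :=
          hIndex_le_card _
      _ = (commonHNbrs G h e).toFinite.toFinset.card := Multiset.card_map _ _
      _ = hSupport G h e :=
          (Set.ncard_eq_toFinset_card (commonHNbrs G h e) (commonHNbrs G h e).toFinite).symm
  | succ n ih =>
    intro e
    show hIndex _ ≤ hIndex _
    exact hIndex_map_mono _ _ _ (fun w _ =>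
      edgeKey_mono G h (HSup G h (n + 1)) (HSup G h n) (fun s => ih s) e w)

end Aux

/-- Stabilization: the sequence `H^(n)sup(e)` is eventually constant. -/
theorem HSup_eventually_constant {V : Type*} [Fintype V] (G : SimpleGraph V) (h : ℕ)
    (hh : 1 ≤ h) (e : Sym2 V) (he : e ∈ G.edgeSet) :
    ∃ N : ℕ, ∀ n, N ≤ n → HSup G h n e = HSup G h N e := by
  have hanti : ∀ m n, m ≤ n → HSup G h n e ≤ HSup G h m e :=
    fun m n hmn =>
      antitone_nat_of_succ_le (f := fun k => HSup G h k e)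
        (fun k => HSup_succ_le G h k e) hmn
  have hne : (Set.range fun n => HSup G h n e).Nonempty := ⟨HSup G h 0 e, 0, rfl⟩
  obtain ⟨N, hN⟩ := Nat.sInf_mem hne
  refine ⟨N, fun n hn => le_antisymm (hanti N n hn) ?_⟩
  have : sInf (Set.range fun n => HSup G h n e) ≤ HSup G h n e := Nat.sInf_le ⟨n, rfl⟩
  simp only [] at hN
  omega
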